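/- Fix reals S_A>0, θ>0, α∈(0,1), and define λ_th := 1/(√(1+1/S_A)+√θ)². Then for every integer j≥0 the function λ ↦ η_j(λ) is strictly decreasing on [0, λ_th], and for every λ ∈ [0, λ_th] and every integer j≥0 one has η_{j+1}(λ) > η_j(λ). -/
import Mathlib


/-- The threshold `v_th(λ,0)` (the formula also gives `v_th(0,0) = 0`). -/
noncomputable def vth0 (SA th lam : ℝ) : ℝ :=
  Real.sqrt (lam * th) + lam / 2 +
    Real.sqrt lam * Real.sqrt (Real.sqrt (lam * th) + lam / 4 + 1 / SA)

/-- `η_j(λ) := 1 − α^j·(1−√(λθ)) − v_th(λ,0)`. -/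
noncomputable def eta (SA th alpha : ℝ) (j : ℕ) (lam : ℝ) : ℝ :=
  1 - alpha ^ j * (1 - Real.sqrt (lam * th)) - vth0 SA th lam

/-- each `η_j` is strictly decreasing on `[0,λ_th]`, and
`η_{j+1}(λ) > η_j(λ)` on `[0,λ_th]`. -/
theorem stmt_9 (SA th alpha lamth : ℝ) (hSA : 0 < SA) (hth : 0 < th)
    (halpha : alpha ∈ Set.Ioo (0 : ℝ) 1)
    (hlamth : lamth = 1 / (Real.sqrt (1 + 1 / SA) + Real.sqrt th) ^ 2) :
    (∀ j : ℕ, StrictAntiOn (eta SA th alpha j) (Set.Icc 0 lamth)) ∧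
      (∀ lam ∈ Set.Icc (0 : ℝ) lamth, ∀ j : ℕ,
        eta SA th alpha j lam < eta SA th alpha (j + 1) lam) := by
  obtain ⟨ha0, ha1⟩ := halpha
  constructor
  · intro j a ha b hb hab
    have ha0' : (0:ℝ) ≤ a := ha.1
    have h1 : Real.sqrt (a * th) ≤ Real.sqrt (b * th) :=
      Real.sqrt_le_sqrt (by nlinarith)
    have h2 : Real.sqrt a ≤ Real.sqrt b := Real.sqrt_le_sqrt hab.le
    have h3 : Real.sqrt (Real.sqrt (a * th) + a / 4 + 1 / SA) ≤
        Real.sqrt (Real.sqrt (b * th) + b / 4 + 1 / SA) :=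
      Real.sqrt_le_sqrt (by linarith)
    have h4 : Real.sqrt a * Real.sqrt (Real.sqrt (a * th) + a / 4 + 1 / SA) ≤
        Real.sqrt b * Real.sqrt (Real.sqrt (b * th) + b / 4 + 1 / SA) :=
      mul_le_mul h2 h3 (Real.sqrt_nonneg _) (Real.sqrt_nonneg _)
    have hp : alpha ^ j ≤ 1 := pow_le_one₀ ha0.le ha1.le
    have h5 : alpha ^ j * (Real.sqrt (b * th) - Real.sqrt (a * th)) ≤
        Real.sqrt (b * th) - Real.sqrt (a * th) :=
      mul_le_of_le_one_left (by linarith) hp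
    simp only [eta, vth0]
    nlinarith [h4, h5, hab]
  · intro lam hlam j
    have hc : (0:ℝ) < Real.sqrt (1 + 1 / SA) + Real.sqrt th := by
      have : (0:ℝ) < Real.sqrt (1 + 1 / SA) := Real.sqrt_pos.mpr (by positivity)
      have := Real.sqrt_nonneg th
      linarith
    have hsq : (Real.sqrt (1 + 1 / SA) + Real.sqrt th) ^ 2 > th := by
      have e1 : Real.sqrt (1 + 1 / SA) ^ 2 = 1 + 1 / SA := Real.sq_sqrt (by positivity)
      have e2 : Real.sqrt th ^ 2 = th := Real.sq_sqrt hth.le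
      have h1 : (0:ℝ) < 1 / SA := by positivity
      nlinarith [Real.sqrt_nonneg (1 + 1 / SA), Real.sqrt_nonneg th,
        mul_nonneg (Real.sqrt_nonneg (1 + 1 / SA)) (Real.sqrt_nonneg th)]
    have hlt : lam * th < 1 := by
      have hle : lam ≤ 1 / (Real.sqrt (1 + 1 / SA) + Real.sqrt th) ^ 2 := hlamth ▸ hlam.2
      have hc2 : (0:ℝ) < (Real.sqrt (1 + 1 / SA) + Real.sqrt th) ^ 2 := by positivity
      calc lam * th ≤ (1 / (Real.sqrt (1 + 1 / SA) + Real.sqrt th) ^ 2) * th := by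
            exact mul_le_mul_of_nonneg_right hle hth.le
        _ < 1 := by
            rw [div_mul_eq_mul_div, one_mul, div_lt_one hc2]; exact hsq
    have hs1 : Real.sqrt (lam * th) < 1 := by
      rw [show (1:ℝ) = Real.sqrt 1 from (Real.sqrt_one).symm]
      exact Real.sqrt_lt_sqrt (mul_nonneg hlam.1 hth.le) (by simpa using hlt)
    have hpj : 0 < alpha ^ j := pow_pos ha0 j
    simp only [eta, pow_succ]
    nlinarith [mul_pos hpj (sub_pos.mpr hs1), ha1, hpj, hs1]
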